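/- Suppose R ⊥ Y | X and E[R|X] = π(X) > 0 a.s., with μ*(X) = E[Y|X] and μ̄ any measurable function of X (suitably integrable). Then E[ ((R − π(X))/π(X)) · (Y − μ̄(X)) | X ] = 0 if μ̄ = μ* OR the weighting function used in place of π equals the true π; more precisely, for any measurable w(X) ∈ (0,1], E[ ((R − w(X))/w(X))·(Y − μ̄(X)) ] = E[ ((π(X) − w(X))/w(X))·(μ*(X) − μ̄(X)) ], which vanishes whenever w = π or μ̄ = μ*. -/

import Mathlib

/-!
Conditional independence of `R` and `Y` given `X` makes their conditional covariance vanish, so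
`E[(R - w)(Y - μ̄) | X] = (π - w)(μ* - μ̄)` for every `X`-measurable `w` and `μ̄`; as `1 / w` is
`X`-measurable it passes through the conditional expectation, and integrating gives the identity.
The product rule `E[RY | X] = E[R | X] E[Y | X]` comes from reading conditional independence as
independence under the regular conditional distribution `condExpKernel μ mX ω` for a.e. `ω`.
-/

open MeasureTheory ProbabilityTheory

theorem MeasureTheory.integrable_of_ae_condExp_ne_zero {Ω : Type*}
    {m mΩ : MeasurableSpace Ω} {μ : Measure Ω} [NeZero μ] {f : Ω → ℝ}
    (hf : ∀ᵐ ω ∂μ, μ[f | m] ω ≠ 0) : Integrable f μ := by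
  by_contra h_not_int
  rw [condExp_of_not_integrable h_not_int] at hf
  simpa using hf.exists

namespace ProbabilityTheory

variable {Ω : Type*} {m mΩ : MeasurableSpace Ω} [StandardBorelSpace Ω]
  {μ : Measure Ω} [IsFiniteMeasure μ] {hm : m ≤ mΩ}

theorem CondIndepFun.congr_ae {β γ : Type*} [MeasurableSpace β] [MeasurableSpace γ]
    {f f' : Ω → β} {g g' : Ω → γ} (hfg : CondIndepFun m hm f g μ)
    (hf : f =ᵐ[μ] f') (hg : g =ᵐ[μ] g') : CondIndepFun m hm f' g' μ := by
  rw [← condExpKernel_comp_trim (μ := μ) hm] at hf hg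
  exact Kernel.IndepFun.congr' hfg (Measure.ae_ae_of_ae_comp hf) (Measure.ae_ae_of_ae_comp hg)

theorem CondIndepFun.condExp_mul_of_measurable {f g : Ω → ℝ} (hfg : CondIndepFun m hm f g μ)
    (hf : Measurable f) (hg : Measurable g) (hf_int : Integrable f μ) (hg_int : Integrable g μ)
    (hfg_int : Integrable (f * g) μ) :
    μ[f * g | m] =ᵐ[μ] μ[f | m] * μ[g | m] := by
  have h_indep : ∀ᵐ ω ∂μ, f ⟂ᵢ[condExpKernel μ m ω] g := by
    refine ae_of_ae_trim hm (((condIndepFun_iff_map_prod_eq_prod_map_map hf hg).1 hfg).mono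
      fun ω hω => ?_)
    rw [indepFun_iff_map_prod_eq_prod_map_map hf.aemeasurable hg.aemeasurable]
    simpa [Kernel.map_apply _ (hf.prodMk hg), Kernel.prod_apply, Kernel.map_apply _ hf,
      Kernel.map_apply _ hg] using hω
  filter_upwards [condExp_ae_eq_integral_condExpKernel hm hfg_int,
    condExp_ae_eq_integral_condExpKernel hm hf_int,
    condExp_ae_eq_integral_condExpKernel hm hg_int, h_indep] with ω hfg_ω hf_ω hg_ω h_indep_ω
  rw [Pi.mul_apply, hfg_ω, hf_ω, hg_ω]
  exact h_indep_ω.integral_mul_eq_mul_integral hf.aestronglyMeasurable hg.aestronglyMeasurable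

theorem CondIndepFun.condExp_mul {f g : Ω → ℝ} (hfg : CondIndepFun m hm f g μ)
    (hf : Integrable f μ) (hg : Integrable g μ) (hfg_int : Integrable (f * g) μ) :
    μ[f * g | m] =ᵐ[μ] μ[f | m] * μ[g | m] := by
  have hf_ae := hf.1.ae_eq_mk
  have hg_ae := hg.1.ae_eq_mk
  have hfg_ae : f * g =ᵐ[μ] hf.1.mk f * hg.1.mk g := hf_ae.mul hg_ae
  calc μ[f * g | m] =ᵐ[μ] μ[hf.1.mk f * hg.1.mk g | m] := condExp_congr_ae hfg_ae
    _ =ᵐ[μ] μ[hf.1.mk f | m] * μ[hg.1.mk g | m] :=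
      (hfg.congr_ae hf_ae hg_ae).condExp_mul_of_measurable
        hf.1.stronglyMeasurable_mk.measurable hg.1.stronglyMeasurable_mk.measurable
        (hf.congr hf_ae) (hg.congr hg_ae) (hfg_int.congr hfg_ae)
    _ =ᵐ[μ] μ[f | m] * μ[g | m] :=
      (condExp_congr_ae hf_ae.symm).mul (condExp_congr_ae hg_ae.symm)

variable {f g w h : Ω → ℝ} {C C' : ℝ}

theorem CondIndepFun.condExp_sub_mul_sub_condExp (hfg : CondIndepFun m hm f g μ)
    (hf : Integrable f μ) (hf_bdd : ∀ᵐ ω ∂μ, ‖f ω‖ ≤ C) (hg : Integrable g μ)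
    (hw : StronglyMeasurable[m] w) (hw_bdd : ∀ᵐ ω ∂μ, ‖w ω‖ ≤ C') :
    μ[(f - w) * (g - μ[g | m]) | m] =ᵐ[μ] 0 := by
  have hfg_int : Integrable (f * g) μ := hg.bdd_mul hf.1 hf_bdd
  have hfg'_int : Integrable (f * μ[g | m]) μ := integrable_condExp.bdd_mul hf.1 hf_bdd
  have hg_centered : Integrable (g - μ[g | m]) μ := hg.sub integrable_condExp
  have hwg_int : Integrable (w * (g - μ[g | m])) μ :=
    hg_centered.bdd_mul (hw.mono hm).aestronglyMeasurable hw_bdd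
  have h_centered : μ[g - μ[g | m] | m] =ᵐ[μ] 0 := by
    filter_upwards [condExp_sub hg integrable_condExp m] with ω hω
    rw [hω, condExp_of_stronglyMeasurable hm stronglyMeasurable_condExp integrable_condExp,
      Pi.sub_apply, sub_self, Pi.zero_apply]
  have h_split : (f - w) * (g - μ[g | m]) = f * g - f * μ[g | m] - w * (g - μ[g | m]) := by
    ring
  rw [h_split]
  filter_upwards [condExp_sub (hfg_int.sub hfg'_int) hwg_int m, condExp_sub hfg_int hfg'_int m,
    hfg.condExp_mul hf hg hfg_int,
    condExp_mul_of_stronglyMeasurable_right stronglyMeasurable_condExp hfg'_int hf,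
    condExp_stronglyMeasurable_mul_of_bound hm hw hg_centered C' hw_bdd, h_centered]
    with ω h₁ h₂ h₃ h₄ h₅ h₆
  simp only [h₁, Pi.sub_apply, h₂, h₃, h₄, h₅, Pi.mul_apply, h₆, Pi.zero_apply]
  ring

theorem CondIndepFun.condExp_sub_mul_sub (hfg : CondIndepFun m hm f g μ)
    (hf : Integrable f μ) (hf_bdd : ∀ᵐ ω ∂μ, ‖f ω‖ ≤ C) (hg : Integrable g μ)
    (hw : StronglyMeasurable[m] w) (hw_bdd : ∀ᵐ ω ∂μ, ‖w ω‖ ≤ C')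
    (hh : StronglyMeasurable[m] h) (hfwgh : Integrable ((f - w) * (g - h)) μ) :
    μ[(f - w) * (g - h) | m] =ᵐ[μ] (μ[f | m] - w) * (μ[g | m] - h) := by
  have hw_int : Integrable w μ := .of_bound (hw.mono hm).aestronglyMeasurable C' hw_bdd
  have hfw_bdd : ∀ᵐ ω ∂μ, ‖(f - w) ω‖ ≤ C + C' := by
    filter_upwards [hf_bdd, hw_bdd] with ω hfω hwω
    exact (norm_sub_le _ _).trans (add_le_add hfω hwω)
  have h_centered_int : Integrable ((f - w) * (g - μ[g | m])) μ :=
    (hg.sub integrable_condExp).bdd_mul (hf.sub hw_int).1 hfw_bdd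
  have h_split : (f - w) * (g - h) = (f - w) * (g - μ[g | m]) + (f - w) * (μ[g | m] - h) := by
    ring
  have h_rest_int : Integrable ((f - w) * (μ[g | m] - h)) μ := by
    rw [eq_sub_of_add_eq' h_split.symm]
    exact hfwgh.sub h_centered_int
  rw [h_split]
  filter_upwards [condExp_add h_centered_int h_rest_int m,
    hfg.condExp_sub_mul_sub_condExp hf hf_bdd hg hw hw_bdd,
    condExp_mul_of_stronglyMeasurable_right (stronglyMeasurable_condExp.sub hh) h_rest_int
      (hf.sub hw_int),
    condExp_sub hf hw_int m] with ω h₁ h₂ h₃ h₄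
  rw [h₁, Pi.add_apply, h₂, h₃, Pi.mul_apply, h₄, condExp_of_stronglyMeasurable hm hw hw_int]
  simp

theorem CondIndepFun.integral_sub_div_mul_sub (hfg : CondIndepFun m hm f g μ)
    (hf : Integrable f μ) (hf_bdd : ∀ᵐ ω ∂μ, ‖f ω‖ ≤ C) (hg : Integrable g μ)
    (hw : StronglyMeasurable[m] w) (hw_bdd : ∀ᵐ ω ∂μ, ‖w ω‖ ≤ C') (hw_ne : ∀ ω, w ω ≠ 0)
    (hh : StronglyMeasurable[m] h)
    (hfwgh : Integrable (fun ω => ((f ω - w ω) / w ω) * (g ω - h ω)) μ) :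
    ∫ ω, ((f ω - w ω) / w ω) * (g ω - h ω) ∂μ =
      ∫ ω, ((μ[f | m] ω - w ω) / w ω) * (μ[g | m] ω - h ω) ∂μ := by
  have h_weighted :
      (fun ω => ((f ω - w ω) / w ω) * (g ω - h ω)) = w⁻¹ * ((f - w) * (g - h)) := by
    ext ω
    simp only [Pi.mul_apply, Pi.inv_apply, Pi.sub_apply]
    ring
  have h_unweighted : (f - w) * (g - h) = w * fun ω => ((f ω - w ω) / w ω) * (g ω - h ω) := by
    ext ω
    simp only [Pi.mul_apply, Pi.sub_apply]
    field_simp [hw_ne ω]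
  have h_unweighted_int : Integrable ((f - w) * (g - h)) μ := by
    rw [h_unweighted]
    exact hfwgh.bdd_mul (hw.mono hm).aestronglyMeasurable hw_bdd
  rw [← integral_condExp hm, h_weighted]
  refine integral_congr_ae ?_
  filter_upwards [condExp_mul_of_stronglyMeasurable_left hw.measurable.inv.stronglyMeasurable
      (h_weighted ▸ hfwgh) h_unweighted_int,
    hfg.condExp_sub_mul_sub hf hf_bdd hg hw hw_bdd hh h_unweighted_int] with ω h₁ h₂
  rw [h₁, Pi.mul_apply, h₂]
  simp only [Pi.mul_apply, Pi.inv_apply, Pi.sub_apply]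
  ring

end ProbabilityTheory

theorem aipw_product_bias_identity_general
    {Ω : Type*} {mΩ : MeasurableSpace Ω} [StandardBorelSpace Ω]
    {μ : Measure Ω} [IsProbabilityMeasure μ]
    (mX : MeasurableSpace Ω) (hmX : mX ≤ mΩ)
    (R Y : Ω → ℝ)
    (hR01 : ∀ ω, R ω = 0 ∨ R ω = 1)
    -- MAR: R ⊥ Y | X, where mX = σ(X)
    (hMAR : CondIndepFun mX hmX R Y μ)
    (πX : Ω → ℝ)
    (hπ : πX =ᵐ[μ] μ[R | mX])
    (hπpos : ∀ᵐ ω ∂μ, 0 < πX ω)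
    (mstar : Ω → ℝ) (hmstar : mstar =ᵐ[μ] μ[Y | mX])
    (mbar : Ω → ℝ) (hmbar : Measurable[mX] mbar)
    (w : Ω → ℝ) (hw : Measurable[mX] w) (hw01 : ∀ ω, w ω ∈ Set.Ioc (0 : ℝ) 1)
    (hYint : Integrable Y μ)
    (hint1 : Integrable (fun ω => ((R ω - w ω) / w ω) * (Y ω - mbar ω)) μ) :
    ((∫ ω, ((R ω - w ω) / w ω) * (Y ω - mbar ω) ∂μ) =
        ∫ ω, ((πX ω - w ω) / w ω) * (mstar ω - mbar ω) ∂μ) ∧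
      (w =ᵐ[μ] πX → (∫ ω, ((R ω - w ω) / w ω) * (Y ω - mbar ω) ∂μ) = 0) ∧
      (mbar =ᵐ[μ] mstar → (∫ ω, ((R ω - w ω) / w ω) * (Y ω - mbar ω) ∂μ) = 0) := by
  have hR_int : Integrable R μ := integrable_of_ae_condExp_ne_zero <| by
    filter_upwards [hπ, hπpos] with ω hπω hπω_pos
    exact hπω ▸ hπω_pos.ne'
  have hR_bdd : ∀ ω, ‖R ω‖ ≤ 1 := fun ω => by rcases hR01 ω with h | h <;> simp [h]
  have hw_bdd : ∀ ω, ‖w ω‖ ≤ 1 := fun ω => by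
    rw [Real.norm_of_nonneg (hw01 ω).1.le]
    exact (hw01 ω).2
  have h_bias : (∫ ω, ((R ω - w ω) / w ω) * (Y ω - mbar ω) ∂μ) =
      ∫ ω, ((πX ω - w ω) / w ω) * (mstar ω - mbar ω) ∂μ := by
    rw [hMAR.integral_sub_div_mul_sub hR_int (.of_forall hR_bdd) hYint hw.stronglyMeasurable
      (.of_forall hw_bdd) (fun ω => (hw01 ω).1.ne') hmbar.stronglyMeasurable hint1]
    refine integral_congr_ae ?_
    filter_upwards [hπ, hmstar] with ω hπω hmstar_ω
    rw [hπω, hmstar_ω]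
  refine ⟨h_bias, fun hwπ => ?_, fun hmbar_mstar => ?_⟩ <;> rw [h_bias] <;>
    refine integral_eq_zero_of_ae ?_
  · filter_upwards [hwπ] with ω hω
    simp [hω]
  · filter_upwards [hmbar_mstar] with ω hω
    simp [hω]

/-- Product-bias (double robustness) identity for the AIPW mean
functional under MAR: for any measurable weighting function `w(X) ∈ (0,1]`,
`E[((R − w(X))/w(X))·(Y − μ̄(X))] = E[((π(X) − w(X))/w(X))·(μ*(X) − μ̄(X))]`,
which vanishes whenever `w = π` or `μ̄ = μ*`. -/
theorem aipw_product_bias_identity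
    {Ω : Type*} {mΩ : MeasurableSpace Ω} [StandardBorelSpace Ω]
    {μ : Measure Ω} [IsProbabilityMeasure μ]
    (mX : MeasurableSpace Ω) (hmX : mX ≤ mΩ)
    (R Y : Ω → ℝ)
    (hR01 : ∀ ω, R ω = 0 ∨ R ω = 1)
    -- MAR: R ⊥ Y | X, where mX = σ(X)
    (hMAR : CondIndepFun mX hmX R Y μ)
    (πX : Ω → ℝ)
    (hπX : Measurable[mX] πX)
    (hπ : πX =ᵐ[μ] μ[R | mX])
    (hπpos : ∀ᵐ ω ∂μ, 0 < πX ω)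
    (mstar : Ω → ℝ) (hmstar : mstar =ᵐ[μ] μ[Y | mX])
    (mbar : Ω → ℝ) (hmbar : Measurable[mX] mbar)
    (w : Ω → ℝ) (hw : Measurable[mX] w) (hw01 : ∀ ω, w ω ∈ Set.Ioc (0 : ℝ) 1)
    (hYint : Integrable Y μ)
    (hint1 : Integrable (fun ω => ((R ω - w ω) / w ω) * (Y ω - mbar ω)) μ)
    (hint2 : Integrable (fun ω => ((πX ω - w ω) / w ω) * (mstar ω - mbar ω)) μ) :
    ((∫ ω, ((R ω - w ω) / w ω) * (Y ω - mbar ω) ∂μ) =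
        ∫ ω, ((πX ω - w ω) / w ω) * (mstar ω - mbar ω) ∂μ) ∧
      (w =ᵐ[μ] πX → (∫ ω, ((R ω - w ω) / w ω) * (Y ω - mbar ω) ∂μ) = 0) ∧
      (mbar =ᵐ[μ] mstar → (∫ ω, ((R ω - w ω) / w ω) * (Y ω - mbar ω) ∂μ) = 0) :=
  aipw_product_bias_identity_general mX hmX R Y hR01 hMAR πX hπ hπpos mstar hmstar mbar hmbar w hw
    hw01 hYint hint1
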